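/- Let d ≥ 1, let n = 2d, and let Δ be a well-distributed f-simplicial complex on [n]. Then the set of minimal nonfaces of Δ^c equals the set of facets of Δ, i.e., N(Δ^c) = F(Δ). -/

import Mathlib

open Finset

/-- `Δ`, given as the finset of its faces, is a simplicial complex on the vertex
set `Fin n`: a nonempty collection of subsets closed under taking subsets. -/
def IsComplex {n : ℕ} (Δ : Finset (Finset (Fin n))) : Prop :=
  Δ.Nonempty ∧ ∀ A ∈ Δ, ∀ B ⊆ A, B ∈ Δ

/-- The facets (maximal faces) of `Δ`. -/
def facets {n : ℕ} (Δ : Finset (Finset (Fin n))) : Finset (Finset (Fin n)) :=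
  Δ.filter fun F => ∀ G ∈ Δ, F ⊆ G → F = G

/-- The simplicial complex generated by a family `𝔉`: all subsets of members of `𝔉`. -/
def generated {n : ℕ} (𝔉 : Finset (Finset (Fin n))) : Finset (Finset (Fin n)) :=
  univ.filter fun A => ∃ F ∈ 𝔉, A ⊆ F

/-- The Newton complement dual `Δ^c`: the complex generated by the complements
of the facets of `Δ`. -/
def cdual {n : ℕ} (Δ : Finset (Finset (Fin n))) : Finset (Finset (Fin n)) :=
  generated ((facets Δ).image fun F => Fᶜ)

/-- The nonface complex of `Δ`: all subsets of `[n]` containing no facet of `Δ`. -/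
def nonfaceComplex {n : ℕ} (Δ : Finset (Finset (Fin n))) : Finset (Finset (Fin n)) :=
  univ.filter fun A => ∀ F ∈ facets Δ, ¬ F ⊆ A

/-- `Δ` is an `f`-simplicial complex: for every `k`, `Δ` and its nonface complex
have the same number of `k`-element members (the same `f`-vector). -/
def IsFComplex {n : ℕ} (Δ : Finset (Finset (Fin n))) : Prop :=
  ∀ k : ℕ, (Δ.filter fun A => A.card = k).card =
    ((nonfaceComplex Δ).filter fun A => A.card = k).card

/-- `Δ` is pure `(d-1)`-dimensional: every facet has exactly `d` elements. -/
def PureDim {n : ℕ} (d : ℕ) (Δ : Finset (Finset (Fin n))) : Prop :=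
  ∀ F ∈ facets Δ, F.card = d

/-- The minimal nonfaces of `Δ`: sets that are not faces but all of whose proper
subsets are faces. -/
def minNonfaces {n : ℕ} (Δ : Finset (Finset (Fin n))) : Finset (Finset (Fin n)) :=
  univ.filter fun A => A ∉ Δ ∧ ∀ B ⊂ A, B ∈ Δ

/-- The Alexander dual `Δ^∨`: the complex whose facets are the complements of the
minimal nonfaces of `Δ`. -/
def adual {n : ℕ} (Δ : Finset (Finset (Fin n))) : Finset (Finset (Fin n)) :=
  generated ((minNonfaces Δ).image fun F => Fᶜ)

/-- The homogeneous complement `Δ'` (in degree `e`): the complex generated by the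
`e`-element subsets of `[n]` that are not facets of `Δ`. -/
def hcompl {n : ℕ} (e : ℕ) (Δ : Finset (Finset (Fin n))) : Finset (Finset (Fin n)) :=
  generated (univ.filter fun A : Finset (Fin n) => A.card = e ∧ A ∉ facets Δ)

/-!
Faces of `Δ^c` are the sets whose complement contains a facet of `Δ`, so a set is a nonface of
`Δ^c` exactly when its complement lies in the nonface complex of `Δ`. Since `Δ` has no faces with
more than `d` elements, the `f`-vector equality forces every set with more than `d` elements to
contain a facet. In size `d`, well-distributedness says that the complement of a facet is never a
facet, so complementation injects `F(Δ)` into the `d`-element members of the nonface complex, and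
the `f`-vector equality in degree `d` makes it a bijection. Hence the minimal nonfaces of `Δ^c`
are exactly the `d`-sets whose complements are `d`-element nonfaces of `Δ`, i.e. the facets.
-/

section

variable {n d : ℕ} {Δ : Finset (Finset (Fin n))} {A F : Finset (Fin n)}

lemma mem_nonfaceComplex : A ∈ nonfaceComplex Δ ↔ ∀ F ∈ facets Δ, ¬ F ⊆ A := by
  simp [nonfaceComplex]

lemma mem_cdual : A ∈ cdual Δ ↔ ∃ F ∈ facets Δ, F ⊆ Aᶜ := by
  simp only [cdual, generated, mem_filter, mem_univ, true_and, mem_image,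
    exists_exists_and_eq_and]
  exact exists_congr fun _ => and_congr_right fun _ => subset_compl_comm

lemma notMem_cdual_iff : A ∉ cdual Δ ↔ Aᶜ ∈ nonfaceComplex Δ := by
  simp [mem_cdual, mem_nonfaceComplex]

lemma exists_mem_facets_superset (hA : A ∈ Δ) : ∃ F ∈ facets Δ, A ⊆ F := by
  obtain ⟨F, hF, hmax⟩ := exists_max_image (Δ.filter (A ⊆ ·)) card ⟨A, by simp [hA]⟩
  rw [mem_filter] at hF
  refine ⟨F, mem_filter.mpr ⟨hF.1, fun G hG hFG => ?_⟩, hF.2⟩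
  exact eq_of_subset_of_card_le hFG (hmax G (mem_filter.mpr ⟨hG, hF.2.trans hFG⟩))

namespace PureDim

lemma card_le (hpure : PureDim d Δ) (hA : A ∈ Δ) : A.card ≤ d := by
  obtain ⟨F, hF, hAF⟩ := exists_mem_facets_superset hA
  exact (card_le_card hAF).trans (hpure F hF).le

lemma facets_eq_filter (hpure : PureDim d Δ) : facets Δ = Δ.filter (·.card = d) := by
  ext F
  refine ⟨fun hF => mem_filter.mpr ⟨(mem_filter.mp hF).1, hpure F hF⟩, fun hF => ?_⟩
  obtain ⟨hFΔ, hcard⟩ := mem_filter.mp hF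
  exact mem_filter.mpr ⟨hFΔ, fun G hG hFG =>
    eq_of_subset_of_card_le hFG (hcard ▸ hpure.card_le hG)⟩

lemma card_le_of_mem_cdual (hpure : PureDim d Δ) (hA : A ∈ cdual Δ) : A.card ≤ n - d := by
  obtain ⟨F, hF, hFA⟩ := mem_cdual.mp hA
  have := card_le_card (subset_compl_comm.mp hFA)
  rwa [card_compl, Fintype.card_fin, hpure F hF] at this

lemma mem_facets_cdual_of_compl_mem_facets (hpure : PureDim d Δ) (hF : Fᶜ ∈ facets Δ) :
    F ∈ facets (cdual Δ) := by
  have hFcard : F.card = n - d := by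
    have := card_compl_add_card F
    rw [Fintype.card_fin, hpure _ hF] at this
    omega
  refine mem_filter.mpr ⟨mem_cdual.mpr ⟨Fᶜ, hF, subset_rfl⟩, fun G hG hFG => ?_⟩
  exact eq_of_subset_of_card_le hFG (hFcard ▸ hpure.card_le_of_mem_cdual hG)

lemma compl_notMem_facets (hpure : PureDim d Δ) (hwd : facets Δ ∩ facets (cdual Δ) = ∅)
    (hF : F ∈ facets Δ) : Fᶜ ∉ facets Δ := fun hFc =>
  (eq_empty_iff_forall_notMem.mp hwd F)
    (mem_inter.mpr ⟨hF, hpure.mem_facets_cdual_of_compl_mem_facets (compl_compl F ▸ hFc)⟩)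

end PureDim

lemma card_compl_of_card_eq (hn : n = 2 * d) (hA : A.card = d) : Aᶜ.card = d := by
  rw [card_compl, Fintype.card_fin, hA]
  omega

lemma compl_mem_nonfaceComplex (hn : n = 2 * d) (hpure : PureDim d Δ)
    (hwd : facets Δ ∩ facets (cdual Δ) = ∅) (hF : F ∈ facets Δ) :
    Fᶜ ∈ nonfaceComplex Δ :=
  mem_nonfaceComplex.mpr fun G hG hGF => by
    have hGeq : G = Fᶜ := eq_of_subset_of_card_le hGF <| by
      rw [hpure G hG, card_compl_of_card_eq hn (hpure F hF)]
    exact hpure.compl_notMem_facets hwd hF (hGeq ▸ hG)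

namespace IsFComplex

lemma card_le_of_mem_nonfaceComplex (hf : IsFComplex Δ) (hpure : PureDim d Δ)
    (hA : A ∈ nonfaceComplex Δ) : A.card ≤ d := by
  have hne : ((nonfaceComplex Δ).filter (·.card = A.card)).Nonempty :=
    ⟨A, mem_filter.mpr ⟨hA, rfl⟩⟩
  rw [← card_pos, ← hf, card_pos] at hne
  obtain ⟨B, hB⟩ := hne
  obtain ⟨hBΔ, hBcard⟩ := mem_filter.mp hB
  exact hBcard ▸ hpure.card_le hBΔ

lemma image_compl_facets (hf : IsFComplex Δ) (hn : n = 2 * d) (hpure : PureDim d Δ)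
    (hwd : facets Δ ∩ facets (cdual Δ) = ∅) :
    (facets Δ).image compl = (nonfaceComplex Δ).filter (·.card = d) := by
  refine eq_of_subset_of_card_le (fun B hB => ?_) ?_
  · obtain ⟨F, hF, rfl⟩ := mem_image.mp hB
    exact mem_filter.mpr
      ⟨compl_mem_nonfaceComplex hn hpure hwd hF, card_compl_of_card_eq hn (hpure F hF)⟩
  · rw [card_image_of_injective _ compl_injective, hpure.facets_eq_filter, hf d]

lemma compl_mem_facets (hf : IsFComplex Δ) (hn : n = 2 * d) (hpure : PureDim d Δ)
    (hwd : facets Δ ∩ facets (cdual Δ) = ∅) (hA : A ∈ nonfaceComplex Δ)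
    (hcard : A.card = d) : Aᶜ ∈ facets Δ := by
  obtain ⟨F, hF, rfl⟩ := mem_image.mp
    (hf.image_compl_facets hn hpure hwd ▸ mem_filter.mpr ⟨hA, hcard⟩)
  rwa [compl_compl]

lemma exists_mem_facets_subset_of_lt_card (hf : IsFComplex Δ) (hpure : PureDim d Δ)
    (hA : d < A.card) : ∃ F ∈ facets Δ, F ⊆ A := by
  by_contra! h
  exact (hf.card_le_of_mem_nonfaceComplex hpure (mem_nonfaceComplex.mpr h)).not_gt hA

lemma mem_cdual_of_card_lt (hf : IsFComplex Δ) (hn : n = 2 * d) (hpure : PureDim d Δ)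
    (hA : A.card < d) : A ∈ cdual Δ :=
  mem_cdual.mpr <| hf.exists_mem_facets_subset_of_lt_card hpure <| by
    rw [card_compl, Fintype.card_fin]
    omega

end IsFComplex

end

theorem stmt2_general {d n : ℕ} (hn : n = 2 * d)
    (Δ : Finset (Finset (Fin n))) (hpure : PureDim d Δ)
    (hf : IsFComplex Δ) (hwd : facets Δ ∩ facets (cdual Δ) = ∅) :
    minNonfaces (cdual Δ) = facets Δ := by
  have facet_notMem_cdual {F} (hF : F ∈ facets Δ) : F ∉ cdual Δ :=
    notMem_cdual_iff.mpr (compl_mem_nonfaceComplex hn hpure hwd hF)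
  ext A
  simp only [minNonfaces, mem_filter, mem_univ, true_and]
  refine ⟨fun ⟨hA, hmin⟩ => ?_, fun hA => ⟨facet_notMem_cdual hA, fun B hB => ?_⟩⟩
  · have hAc := notMem_cdual_iff.mp hA
    have hAc_card := hf.card_le_of_mem_nonfaceComplex hpure hAc
    rw [card_compl, Fintype.card_fin] at hAc_card
    obtain hcard | hcard : A.card = d ∨ d < A.card := by omega
    · simpa using hf.compl_mem_facets hn hpure hwd hAc (card_compl_of_card_eq hn hcard)
    · obtain ⟨G, hG, hGA⟩ := hf.exists_mem_facets_subset_of_lt_card hpure hcard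
      have hGA' : G ⊂ A := ssubset_of_subset_of_ne hGA fun h => hcard.ne' (h ▸ hpure G hG)
      exact (facet_notMem_cdual hG (hmin G hGA')).elim
  · exact hf.mem_cdual_of_card_lt hn hpure (hpure A hA ▸ card_lt_card hB)

/-- for a well-distributed `f`-simplicial complex `Δ` (`n = 2d`, `Δ` pure
`(d-1)`-dimensional, `F(Δ) ∩ F(Δ^c) = ∅`), we have `N(Δ^c) = F(Δ)`. -/
theorem stmt2 {d n : ℕ} (hd : 1 ≤ d) (hn : n = 2 * d)
    (Δ : Finset (Finset (Fin n))) (hΔ : IsComplex Δ) (hpure : PureDim d Δ)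
    (hf : IsFComplex Δ) (hwd : facets Δ ∩ facets (cdual Δ) = ∅) :
    minNonfaces (cdual Δ) = facets Δ :=
  stmt2_general hn Δ hpure hf hwd
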